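/- If (v,w) is a pair of symmetric 4×4 complex matrices satisfying the Plücker relations of G(3,6), then the rank of v is at most 1 if and only if the rank of w is at most 1. -/

import Mathlib

open Matrix

/-- The smaller element `ǐ₁` of the complement of a 2-element subset `{i₁, i₂}`
of `{1,2,3,4}` (indexed by `Fin 4`). -/
def dual₁ (i₁ i₂ : Fin 4) : Fin 4 :=
  (({i₁, i₂}ᶜ : Finset (Fin 4))).min' (by
    rw [← Finset.card_pos, Finset.card_compl]
    have h : ({i₁, i₂} : Finset (Fin 4)).card ≤ 2 :=
      (Finset.card_insert_le _ _).trans (by simp)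
    simp only [Fintype.card_fin]
    omega)

/-- The larger element `ǐ₂` of the complement of a 2-element subset `{i₁, i₂}`
of `{1,2,3,4}` (indexed by `Fin 4`). -/
def dual₂ (i₁ i₂ : Fin 4) : Fin 4 :=
  (({i₁, i₂}ᶜ : Finset (Fin 4))).max' (by
    rw [← Finset.card_pos, Finset.card_compl]
    have h : ({i₁, i₂} : Finset (Fin 4)).card ≤ 2 :=
      (Finset.card_insert_le _ _).trans (by simp)
    simp only [Fintype.card_fin]
    omega)

/-- The sign `ε(I)` of the permutation sending `(1,2,3,4)` to `(i₁,i₂,ǐ₁,ǐ₂)`,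
for `I = {i₁ < i₂}` with complement `Ǐ = {ǐ₁ < ǐ₂}`. -/
noncomputable def eps (i₁ i₂ : Fin 4) : ℂ :=
  if h : Function.Bijective ![i₁, i₂, dual₁ i₁ i₂, dual₂ i₁ i₂] then
    ((Equiv.Perm.sign (Equiv.ofBijective _ h) : ℤ) : ℂ)
  else 0

/-- The 2×2 minor `m[I,J] = m_{i₁j₁}m_{i₂j₂} − m_{i₁j₂}m_{i₂j₁}`. -/
def minor (m : Matrix (Fin 4) (Fin 4) ℂ) (i₁ i₂ j₁ j₂ : Fin 4) : ℂ :=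
  m i₁ j₁ * m i₂ j₂ - m i₁ j₂ * m i₂ j₁

/-- The pair `(v,w)` of symmetric 4×4 complex matrices satisfies the Plücker
relations of `G(3,6)` (the generators of the Plücker ideal of the embedding
`G(3,∧²V₄) ⊂ ℙ(S²V₄ ⊕ S²V₄*)` given by the double spin decomposition):
(i) `v[I,J] = ε(I)ε(J)·w[Ǐ,J̌]` for all 2-element subsets `I, J`, and
(ii) `v·w` has vanishing off-diagonal entries and equal diagonal entries. -/
structure PluckerPair (v w : Matrix (Fin 4) (Fin 4) ℂ) : Prop where
  symm_v : v.IsSymm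
  symm_w : w.IsSymm
  minor_rel : ∀ i₁ i₂ j₁ j₂ : Fin 4, i₁ < i₂ → j₁ < j₂ →
    minor v i₁ i₂ j₁ j₂ =
      eps i₁ i₂ * eps j₁ j₂ *
        minor w (dual₁ i₁ i₂) (dual₂ i₁ i₂) (dual₁ j₁ j₂) (dual₂ j₁ j₂)
  offDiag : ∀ i j : Fin 4, i ≠ j → (v * w) i j = 0
  diag : ∀ i j : Fin 4, (v * w) i i = (v * w) j j

/-!
A matrix has rank at most one exactly when all its 2×2 minors vanish, and it suffices to test
minors with sorted row and column indices. Relation (i) expresses each such minor of `v` as a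
nonzero multiple (`ε(I)ε(J) = ±1`) of a minor of `w` with sorted indices, and `I ↦ Ǐ` is an
involution on sorted pairs, so the minors of `v` all vanish iff those of `w` do.
-/

namespace Matrix

variable {m n K : Type*}

theorem mul_eq_mul_of_rank_le_one [Fintype n] [Field K] {M : Matrix m n K} (hM : M.rank ≤ 1)
    (i j : m) (k l : n) : M i k * M j l = M i l * M j k := by
  by_contra hne
  have hdet : (M.submatrix ![i, j] ![k, l]).det ≠ 0 := by
    rw [det_fin_two]
    simpa [sub_eq_zero] using hne
  have hrank := (rank_submatrix_le M ![i, j] ![k, l]).trans hM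
  rw [rank_of_det_ne_zero hdet, Fintype.card_fin] at hrank
  omega

theorem rank_le_one_of_mul_eq_mul [Fintype n] [Field K] {M : Matrix m n K}
    (hM : ∀ i j k l, M i k * M j l = M i l * M j k) : M.rank ≤ 1 := by
  by_cases hzero : M = 0
  · simp [hzero]
  obtain ⟨a, b, hab⟩ : ∃ a b, M a b ≠ 0 := by
    by_contra! h
    exact hzero (ext h)
  have hvec : M = vecMulVec (fun i => M i b) (fun c => M a c / M a b) := by
    ext i c
    rw [vecMulVec_apply, mul_div_assoc', eq_div_iff hab]
    exact hM i a c b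
  rw [hvec]
  exact rank_vecMulVec_le _ _

theorem rank_le_one_iff_mul_eq_mul [Fintype n] [Field K] (M : Matrix m n K) :
    M.rank ≤ 1 ↔ ∀ i j k l, M i k * M j l = M i l * M j k :=
  ⟨mul_eq_mul_of_rank_le_one, rank_le_one_of_mul_eq_mul⟩

theorem forall_mul_eq_mul_iff_of_lt [LinearOrder m] [LinearOrder n] [CommRing K]
    (M : Matrix m n K) :
    (∀ i j k l, M i k * M j l = M i l * M j k) ↔
      ∀ i j k l, i < j → k < l → M i k * M j l = M i l * M j k := by
  refine ⟨fun h i j k l _ _ => h i j k l, fun h => ?_⟩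
  have hrows : ∀ i j, i < j → ∀ k l, M i k * M j l = M i l * M j k := by
    intro i j hij k l
    rcases lt_trichotomy k l with hkl | rfl | hlk
    · exact h i j k l hij hkl
    · rfl
    · linear_combination -h i j l k hij hlk
  intro i j k l
  rcases lt_trichotomy i j with hij | rfl | hji
  · exact hrows i j hij k l
  · ring
  · linear_combination -hrows j i hji k l

end Matrix

theorem rank_le_one_iff_minor_eq_zero (M : Matrix (Fin 4) (Fin 4) ℂ) :
    M.rank ≤ 1 ↔ ∀ i₁ i₂ j₁ j₂ : Fin 4, i₁ < i₂ → j₁ < j₂ → minor M i₁ i₂ j₁ j₂ = 0 := by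
  simp only [minor, sub_eq_zero]
  rw [Matrix.rank_le_one_iff_mul_eq_mul, Matrix.forall_mul_eq_mul_iff_of_lt]

theorem dual₁_lt_dual₂ : ∀ i₁ i₂ : Fin 4, i₁ < i₂ → dual₁ i₁ i₂ < dual₂ i₁ i₂ := by decide

theorem dual₁_dual : ∀ i₁ i₂ : Fin 4, i₁ < i₂ → dual₁ (dual₁ i₁ i₂) (dual₂ i₁ i₂) = i₁ := by
  decide

theorem dual₂_dual : ∀ i₁ i₂ : Fin 4, i₁ < i₂ → dual₂ (dual₁ i₁ i₂) (dual₂ i₁ i₂) = i₂ := by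
  decide

theorem bijective_dual : ∀ i₁ i₂ : Fin 4, i₁ < i₂ →
    Function.Bijective ![i₁, i₂, dual₁ i₁ i₂, dual₂ i₁ i₂] := by
  decide

theorem eps_ne_zero {i₁ i₂ : Fin 4} (hi : i₁ < i₂) : eps i₁ i₂ ≠ 0 := by
  rw [eps, dif_pos (bijective_dual i₁ i₂ hi)]
  exact Int.cast_ne_zero.mpr (Units.ne_zero _)

theorem PluckerPair.minor_eq_zero_iff {v w : Matrix (Fin 4) (Fin 4) ℂ} (h : PluckerPair v w)
    {i₁ i₂ j₁ j₂ : Fin 4} (hi : i₁ < i₂) (hj : j₁ < j₂) :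
    minor v i₁ i₂ j₁ j₂ = 0 ↔
      minor w (dual₁ i₁ i₂) (dual₂ i₁ i₂) (dual₁ j₁ j₂) (dual₂ j₁ j₂) = 0 := by
  rw [h.minor_rel i₁ i₂ j₁ j₂ hi hj,
    mul_eq_zero_iff_left (mul_ne_zero (eps_ne_zero hi) (eps_ne_zero hj))]

/-- If `(v,w)` satisfies the Plücker relations of `G(3,6)`, then
`rank v ≤ 1 ↔ rank w ≤ 1`. -/
theorem rank_le_one_iff_of_plucker (v w : Matrix (Fin 4) (Fin 4) ℂ) (h : PluckerPair v w) :
    v.rank ≤ 1 ↔ w.rank ≤ 1 := by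
  rw [rank_le_one_iff_minor_eq_zero, rank_le_one_iff_minor_eq_zero]
  constructor
  · intro hv i₁ i₂ j₁ j₂ hi hj
    have hdual := (h.minor_eq_zero_iff (dual₁_lt_dual₂ _ _ hi) (dual₁_lt_dual₂ _ _ hj)).1
      (hv _ _ _ _ (dual₁_lt_dual₂ _ _ hi) (dual₁_lt_dual₂ _ _ hj))
    rwa [dual₁_dual _ _ hi, dual₂_dual _ _ hi, dual₁_dual _ _ hj, dual₂_dual _ _ hj] at hdual
  · intro hw i₁ i₂ j₁ j₂ hi hj
    exact (h.minor_eq_zero_iff hi hj).2 (hw _ _ _ _ (dual₁_lt_dual₂ _ _ hi) (dual₁_lt_dual₂ _ _ hj))
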